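/- Let G₁ be a tournament of size n-1 (n = 4k+3) whose Seidel matrix S₁ has eigenvalues √n, 1, -1, -√n with multiplicities (n-3)/2, 1, 1, (n-3)/2 and main angles 0, 1/√2, 1/√2, 0 respectively. Then G₁ is almost regular, i.e., exactly (n-1)/2 vertices have out-degree (n-1)/2 and exactly (n-1)/2 vertices have out-degree (n-3)/2. -/

import Mathlib

open Matrix Polynomial

noncomputable section

def IsTournament {n : ℕ} (A : Matrix (Fin n) (Fin n) ℝ) : Prop :=
  (∀ i j, A i j = 0 ∨ A i j = 1) ∧ (∀ i, A i i = 0) ∧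
    A + Aᵀ = (Matrix.of fun _ _ => (1:ℝ)) - 1

def Seidel {n : ℕ} (A : Matrix (Fin n) (Fin n) ℝ) : Matrix (Fin n) (Fin n) ℂ :=
  Complex.I • ((A - Aᵀ).map Complex.ofReal)

def IsDoublyRegular {n : ℕ} (A : Matrix (Fin n) (Fin n) ℝ) : Prop :=
  A.mulVec (fun _ => 1) = (fun _ => ((n : ℝ) - 1) / 2) ∧
  A * Aᵀ = (((n : ℝ) + 1) / 4) • 1 + (((n : ℝ) - 3) / 4) • Matrix.of fun _ _ => 1

def eigSpace {n : ℕ} (S : Matrix (Fin n) (Fin n) ℂ) (θ : ℂ) :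
    Submodule ℂ (EuclideanSpace ℂ (Fin n)) :=
  Module.End.eigenspace (Matrix.toEuclideanLin S) θ

def onesE (n : ℕ) : EuclideanSpace ℂ (Fin n) := WithLp.toLp 2 (fun _ => 1)

def mainAngleSq {n : ℕ} (S : Matrix (Fin n) (Fin n) ℂ) (θ : ℂ) : ℝ :=
  ‖(Submodule.orthogonalProjection (eigSpace S θ) (onesE n) : EuclideanSpace ℂ (Fin n))‖ ^ 2 / n

/-! The main angles of `±√n` vanish, so `𝟏` is orthogonal to the `±√n`-eigenspaces of the
Hermitian matrix `S = S₁`, and by the multiplicities all other eigenvalues are `±1`; hence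
`S² 𝟏 = 𝟏`. Concretely, Cayley–Hamilton gives `(S² - n)^{2k} (S² - 1) = 0`, so `u = (S² - 1) 𝟏`
lies in `ker (S² - n)`, i.e. is a sum of `±√n`-eigenvectors and thus orthogonal to `𝟏`; then
`‖u‖² = ⟪𝟏, (S² - 1) u⟫ = (n - 1) ⟪𝟏, u⟫ = 0`.

As `S² = -(A - Aᵀ)²` with `A - Aᵀ` skew-symmetric, `v = (A - Aᵀ) 𝟏` satisfies `‖v‖² = n - 1` and
`∑ vᵢ = 0`. Each `vᵢ = 2 dᵢ - (n - 2)` is an odd integer, so `vᵢ = ±1` with as many `+1` as `-1`: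
half of the out-degrees `dᵢ` are `(n - 1)/2` and half are `(n - 3)/2`. -/

namespace Polynomial

variable {K : Type*} [Field K]

theorem eq_prod_X_sub_C_pow_rootMultiplicity_of_sum_eq_natDegree [DecidableEq K] {p : K[X]}
    (hp : p.Monic) (s : Finset K) (hs : ∑ a ∈ s, p.rootMultiplicity a = p.natDegree) :
    p = ∏ a ∈ s, (X - C a) ^ p.rootMultiplicity a := by
  have hmonic : ∀ a ∈ s, ((X - C a) ^ p.rootMultiplicity a).Monic :=
    fun a _ => (monic_X_sub_C a).pow _
  refine eq_of_monic_of_dvd_of_natDegree_le (monic_prod_of_monic s _ hmonic) hp ?_ ?_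
  · refine Finset.prod_dvd_of_coprime ?_ fun a _ => pow_rootMultiplicity_dvd p a
    exact fun a _ b _ hab => ((pairwise_coprime_X_sub_C Function.injective_id hab).pow)
  · simp only [natDegree_prod_of_monic s _ hmonic, natDegree_pow, natDegree_X_sub_C, mul_one,
      hs, le_refl]

theorem eq_X_sq_sub_C_sq_pow_mul_X_sq_sub_one [CharZero K] {p : K[X]} (hp : p.Monic) {m : ℕ}
    (hdeg : p.natDegree = 2 * m + 2) {r : K} (hr0 : r ≠ 0) (hr1 : r ^ 2 ≠ 1)
    (hpos : p.rootMultiplicity r = m) (hneg : p.rootMultiplicity (-r) = m)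
    (hone : p.rootMultiplicity 1 = 1) (hnegone : p.rootMultiplicity (-1) = 1) :
    p = (X ^ 2 - C (r ^ 2)) ^ m * (X ^ 2 - 1) := by
  classical
  have h1 : r ≠ -r := CharZero.eq_neg_self_iff.not.mpr hr0
  have h2 : r ≠ 1 := by rintro rfl; simp at hr1
  have h3 : r ≠ -1 := by rintro rfl; simp at hr1
  have h4 : -r ≠ 1 := fun h => h3 (neg_eq_iff_eq_neg.mp h)
  have h5 : -r ≠ -1 := fun h => h2 (neg_inj.mp h)
  have h6 : (1 : K) ≠ -1 := CharZero.eq_neg_self_iff.not.mpr one_ne_zero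
  have hs : ∑ a ∈ {r, -r, 1, -1}, p.rootMultiplicity a = p.natDegree := by
    simp only [Finset.sum_insert, Finset.mem_insert, Finset.mem_singleton, h1, h2, h3, h4, h5, h6,
      or_self, not_false_eq_true, Finset.sum_singleton, hpos, hneg, hone, hnegone, hdeg]
    ring
  rw [eq_prod_X_sub_C_pow_rootMultiplicity_of_sum_eq_natDegree hp _ hs]
  simp only [Finset.prod_insert, Finset.mem_insert, Finset.mem_singleton, h1, h2, h3, h4, h5, h6,
    or_self, not_false_eq_true, Finset.prod_singleton, hpos, hneg, hone, hnegone, pow_one,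
    map_neg, map_one, map_pow, sub_neg_eq_add]
  rw [← mul_assoc, ← mul_pow]
  ring

end Polynomial

namespace Matrix

variable {ι : Type*} [Fintype ι]

section Hermitian

variable {R : Type*} [CommRing R] [PartialOrder R] [StarRing R] [StarOrderedRing R]
  [NoZeroDivisors R] {M : Matrix ι ι R} {x : ι → R}

theorem IsHermitian.mulVec_eq_zero_of_mulVec_mulVec_eq_zero (hM : M.IsHermitian)
    (h : M *ᵥ (M *ᵥ x) = 0) : M *ᵥ x = 0 := by
  rw [← dotProduct_star_self_eq_zero, star_mulVec, ← dotProduct_mulVec, hM.eq, h,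
    dotProduct_zero]

theorem IsHermitian.mulVec_eq_zero_of_pow_mulVec_eq_zero [DecidableEq ι] (hM : M.IsHermitian)
    {m : ℕ} (h : M ^ m *ᵥ x = 0) : M *ᵥ x = 0 := by
  induction m generalizing x with
  | zero => rw [pow_zero, one_mulVec] at h; rw [h, mulVec_zero]
  | succ m ih =>
    rw [pow_succ, ← mulVec_mulVec] at h
    exact hM.mulVec_eq_zero_of_mulVec_mulVec_eq_zero (ih h)

end Hermitian

theorem exists_add_eq_of_sq_mulVec_eq_sq_smul {K : Type*} [Field K] [NeZero (2 : K)]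
    [DecidableEq ι] {S : Matrix ι ι K} {r : K} (hr : r ≠ 0) {u : ι → K}
    (h : S ^ 2 *ᵥ u = r ^ 2 • u) :
    ∃ u₁ u₂, S *ᵥ u₁ = r • u₁ ∧ S *ᵥ u₂ = -r • u₂ ∧ u₁ + u₂ = u := by
  have hSSu : S *ᵥ (S *ᵥ u) = r ^ 2 • u := by rw [mulVec_mulVec, ← sq, h]
  refine ⟨(2 * r)⁻¹ • (S *ᵥ u + r • u), (2 * r)⁻¹ • (r • u - S *ᵥ u), ?_, ?_, ?_⟩
  · rw [mulVec_smul, mulVec_add, mulVec_smul, hSSu]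
    match_scalars <;> ring
  · rw [mulVec_smul, mulVec_sub, mulVec_smul, hSSu]
    match_scalars <;> ring
  · match_scalars <;> field_simp <;> ring

open scoped ComplexOrder in
theorem IsHermitian.sq_mulVec_eq_self_of_orthogonal_eigenvectors [DecidableEq ι]
    {S : Matrix ι ι ℂ} (hS : S.IsHermitian) {r : ℝ} (hr : r ≠ 0) {m : ℕ}
    (hann : (S ^ 2 - ((r : ℂ) ^ 2) • 1) ^ m * (S ^ 2 - 1) = 0) (x : ι → ℂ)
    (hpos : ∀ w, S *ᵥ w = (r : ℂ) • w → star x ⬝ᵥ w = 0)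
    (hneg : ∀ w, S *ᵥ w = -(r : ℂ) • w → star x ⬝ᵥ w = 0) :
    S ^ 2 *ᵥ x = x := by
  set u := (S ^ 2 - 1) *ᵥ x with hu
  have hS2 : (S ^ 2 - 1).IsHermitian := (hS.pow 2).sub isHermitian_one
  have hker : (S ^ 2 - ((r : ℂ) ^ 2) • 1) *ᵥ u = 0 := by
    have hr2 : IsSelfAdjoint ((r : ℂ) ^ 2) :=
      (show IsSelfAdjoint (r : ℂ) from Complex.conj_ofReal r).pow 2
    refine ((hS.pow 2).sub (isHermitian_one.smul hr2)).mulVec_eq_zero_of_pow_mulVec_eq_zero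
      (m := m) ?_
    rw [hu, mulVec_mulVec, hann, zero_mulVec]
  have hSu : S ^ 2 *ᵥ u = ((r : ℂ) ^ 2) • u := by
    rwa [sub_mulVec, smul_mulVec, one_mulVec, sub_eq_zero] at hker
  obtain ⟨u₁, u₂, h₁, h₂, hsum⟩ :=
    exists_add_eq_of_sq_mulVec_eq_sq_smul (Complex.ofReal_ne_zero.mpr hr) hSu
  have horth : star x ⬝ᵥ u = 0 := by
    rw [← hsum, dotProduct_add, hpos _ h₁, hneg _ h₂, add_zero]
  have hnorm : star u ⬝ᵥ u = 0 := calc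
    star u ⬝ᵥ u = star x ⬝ᵥ ((S ^ 2 - 1) *ᵥ u) := by
      rw [hu, star_mulVec, ← dotProduct_mulVec, hS2.eq]
    _ = ((r : ℂ) ^ 2 - 1) * (star x ⬝ᵥ u) := by
      rw [sub_mulVec, hSu, one_mulVec, dotProduct_sub, dotProduct_smul, smul_eq_mul]
      ring
    _ = 0 := by rw [horth, mul_zero]
  rwa [dotProduct_star_self_eq_zero, hu, sub_mulVec, one_mulVec, sub_eq_zero] at hnorm

section SkewSymmetric

variable {D : Matrix ι ι ℝ}

theorem mulVec_dotProduct_mulVec_of_transpose_eq_neg (hD : Dᵀ = -D) (x y : ι → ℝ) :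
    (D *ᵥ x) ⬝ᵥ (D *ᵥ y) = -(x ⬝ᵥ (D * D) *ᵥ y) := by
  rw [← vecMul_transpose, ← dotProduct_mulVec, hD, neg_mulVec, dotProduct_neg, mulVec_mulVec]

theorem dotProduct_mulVec_self_of_transpose_eq_neg (hD : Dᵀ = -D) (x : ι → ℝ) :
    x ⬝ᵥ (D *ᵥ x) = 0 := by
  have h : x ⬝ᵥ (D *ᵥ x) = -(x ⬝ᵥ (D *ᵥ x)) := calc
    x ⬝ᵥ (D *ᵥ x) = (Dᵀ *ᵥ x) ⬝ᵥ x := by rw [dotProduct_mulVec, mulVec_transpose]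
    _ = -(x ⬝ᵥ (D *ᵥ x)) := by rw [hD, neg_mulVec, neg_dotProduct, dotProduct_comm]
  linarith

end SkewSymmetric

end Matrix

theorem sq_eq_one_of_one_le_sq_of_sum_sq_eq_card {ι : Type*} [Fintype ι] {v : ι → ℝ}
    (hle : ∀ i, 1 ≤ v i ^ 2) (hsum : ∑ i, v i ^ 2 = Fintype.card ι) (i : ι) : v i ^ 2 = 1 := by
  have h : ∑ _i : ι, (1 : ℝ) = ∑ i, v i ^ 2 := by simp [hsum]
  exact ((Finset.sum_eq_sum_iff_of_le fun i _ => hle i).mp h i (Finset.mem_univ i)).symm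

theorem two_mul_card_filter_eq_of_sum_eq_zero {ι : Type*} [Fintype ι] {v : ι → ℝ}
    (hv : ∀ i, v i = 1 ∨ v i = -1) (hsum : ∑ i, v i = 0) {ε : ℝ} (hε : ε = 1 ∨ ε = -1) :
    2 * (Finset.univ.filter fun i => v i = ε).card = Fintype.card ι := by
  have hε0 : ε ≠ 0 := by rcases hε with rfl | rfl <;> norm_num
  have hterm : ∀ i, v i = ε * (2 * (if v i = ε then 1 else 0) - 1) := by
    intro i
    split_ifs with h
    · rw [h]; ring
    · rcases hv i with h1 | h1 <;> rcases hε with rfl | rfl <;> simp_all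
  rw [Finset.sum_congr rfl fun i _ => hterm i, ← Finset.mul_sum, Finset.sum_sub_distrib,
    ← Finset.mul_sum, Finset.sum_boole, mul_eq_zero] at hsum
  have := hsum.resolve_left hε0
  simp only [Finset.sum_const, Finset.card_univ, nsmul_eq_mul, mul_one] at this
  exact_mod_cast (sub_eq_zero.mp this)

theorem sum_eq_zero_of_mainAngleSq_eq_zero {n : ℕ} {S : Matrix (Fin n) (Fin n) ℂ} {θ : ℂ}
    (hθ : mainAngleSq S θ = 0) {w : Fin n → ℂ} (hw : S *ᵥ w = θ • w) : ∑ i, w i = 0 := by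
  rcases Nat.eq_zero_or_pos n with rfl | hn
  · simp
  have hproj : (eigSpace S θ).orthogonalProjectionOnto (onesE n) = 0 := by
    have := (div_eq_zero_iff.mp hθ).resolve_right (Nat.cast_pos.mpr hn).ne'
    exact Submodule.coe_eq_zero.mp (norm_eq_zero.mp (pow_eq_zero_iff two_ne_zero |>.mp this))
  have hmem : WithLp.toLp 2 w ∈ eigSpace S θ := by
    simp [eigSpace, hw]
  have hinner := Submodule.inner_right_of_mem_orthogonal hmem
    (Submodule.orthogonalProjectionOnto_eq_zero_iff.mp hproj)
  rw [EuclideanSpace.inner_eq_star_dotProduct] at hinner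
  simpa [onesE, dotProduct] using congrArg star hinner

theorem isHermitian_seidel {n : ℕ} (A : Matrix (Fin n) (Fin n) ℝ) : (Seidel A).IsHermitian := by
  ext i j
  simp only [Seidel, conjTranspose_apply, Matrix.smul_apply, map_apply, Matrix.sub_apply,
    transpose_apply, smul_eq_mul, star_mul', Complex.star_def, Complex.conj_I, Complex.conj_ofReal]
  push_cast
  ring

theorem seidel_sq {n : ℕ} (A : Matrix (Fin n) (Fin n) ℝ) :
    Seidel A ^ 2 = -((A - Aᵀ) * (A - Aᵀ)).map Complex.ofReal := by
  rw [sq, Seidel, smul_mul_smul_comm, Complex.I_mul_I, neg_one_smul]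
  congr 1
  ext i j
  simp [Matrix.mul_apply]

namespace IsTournament

variable {n : ℕ} {A : Matrix (Fin n) (Fin n) ℝ}

theorem sub_transpose_mulVec_one_apply (hA : IsTournament A) (i : Fin n) :
    ((A - Aᵀ) *ᵥ 1) i = 2 * (A *ᵥ 1) i - (n - 1) := by
  have hT : Aᵀ = Matrix.of (fun _ _ => 1) - 1 - A := by rw [← hA.2.2]; abel
  rw [hT]
  simp only [mulVec, dotProduct, Matrix.sub_apply, of_apply, one_apply, Pi.one_apply, mul_one,
    Finset.sum_sub_distrib, Finset.sum_const, Finset.card_univ, Fintype.card_fin, nsmul_eq_mul,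
    Finset.sum_ite_eq, Finset.mem_univ, ↓reduceIte]
  ring

theorem exists_mulVec_one_eq_natCast (hA : IsTournament A) (i : Fin n) :
    ∃ d : ℕ, (A *ᵥ 1) i = d := by
  refine ⟨(Finset.univ.filter fun j => A i j = 1).card, ?_⟩
  rw [show (A *ᵥ 1) i = ∑ j, A i j by simp [mulVec, dotProduct], Finset.natCast_card_filter]
  refine Finset.sum_congr rfl fun j _ => ?_
  rcases hA.1 i j with h | h <;> simp [h]

theorem card_filter_mulVec_one_eq_of_sub_transpose_sq {m : ℕ} (hn : n = 2 * m)
    (hA : IsTournament A) (h : ((A - Aᵀ) * (A - Aᵀ)) *ᵥ 1 = -1) :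
    (Finset.univ.filter fun i => (A *ᵥ 1) i = m).card = m ∧
    (Finset.univ.filter fun i => (A *ᵥ 1) i = m - 1).card = m := by
  subst hn
  set v := (A - Aᵀ) *ᵥ 1 with hv_def
  have hD : (A - Aᵀ)ᵀ = -(A - Aᵀ) := by rw [transpose_sub, transpose_transpose, neg_sub]
  have hv : ∀ i, v i = 2 * ((A *ᵥ 1) i - m) + 1 := fun i => by
    rw [hv_def, hA.sub_transpose_mulVec_one_apply]
    push_cast
    ring
  have hle : ∀ i, 1 ≤ v i ^ 2 := by
    intro i
    obtain ⟨d, hd⟩ := hA.exists_mulVec_one_eq_natCast i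
    rw [hv, hd]
    rcases le_or_gt m d with h | h
    · have : (m : ℝ) ≤ d := by exact_mod_cast h
      nlinarith
    · have : (d : ℝ) + 1 ≤ m := by exact_mod_cast h
      nlinarith
  have hsq : ∑ i, v i ^ 2 = Fintype.card (Fin (2 * m)) := by
    have := mulVec_dotProduct_mulVec_of_transpose_eq_neg hD 1 1
    rw [h] at this
    simpa [dotProduct, sq] using this
  have hsum : ∑ i, v i = 0 := by
    rw [← one_dotProduct, hv_def]
    exact dotProduct_mulVec_self_of_transpose_eq_neg hD 1
  have hpm : ∀ i, v i = 1 ∨ v i = -1 := fun i =>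
    sq_eq_one_iff.mp (sq_eq_one_of_one_le_sq_of_sum_sq_eq_card hle hsq i)
  have hcard (ε : ℝ) (hε : ε = 1 ∨ ε = -1) :=
    Fintype.card_fin (2 * m) ▸ two_mul_card_filter_eq_of_sum_eq_zero hpm hsum hε
  have hup : (Finset.univ.filter fun i => (A *ᵥ 1) i = m) = Finset.univ.filter (v · = 1) :=
    Finset.filter_congr fun i _ => by rw [hv]; constructor <;> intro <;> linarith
  have hdown : (Finset.univ.filter fun i => (A *ᵥ 1) i = m - 1) =
      Finset.univ.filter (v · = -1) :=
    Finset.filter_congr fun i _ => by rw [hv]; constructor <;> intro <;> linarith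
  rw [hup, hdown]
  constructor
  · linarith [hcard 1 (Or.inl rfl)]
  · linarith [hcard (-1) (Or.inr rfl)]

end IsTournament

theorem spectrum_implies_almost_regular_general {k : ℕ}
    (A₁ : Matrix (Fin (4 * k + 2)) (Fin (4 * k + 2)) ℝ)
    (hA₁ : IsTournament A₁)
    (hm1 : (Seidel A₁).charpoly.rootMultiplicity (Real.sqrt (4 * k + 3) : ℂ) = 2 * k)
    (hm2 : (Seidel A₁).charpoly.rootMultiplicity 1 = 1)
    (hm3 : (Seidel A₁).charpoly.rootMultiplicity (-1) = 1)
    (hm4 : (Seidel A₁).charpoly.rootMultiplicity (-(Real.sqrt (4 * k + 3) : ℂ)) = 2 * k)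
    (hb1 : mainAngleSq (Seidel A₁) (Real.sqrt (4 * k + 3) : ℂ) = 0)
    (hb4 : mainAngleSq (Seidel A₁) (-(Real.sqrt (4 * k + 3) : ℂ)) = 0) :
    (Finset.univ.filter fun i => A₁.mulVec (fun _ => 1) i = (2 * k + 1 : ℝ)).card = 2 * k + 1 ∧
    (Finset.univ.filter fun i => A₁.mulVec (fun _ => 1) i = (2 * k : ℝ)).card = 2 * k + 1 := by
  set r := Real.sqrt (4 * k + 3)
  have hr : r ^ 2 = 4 * k + 3 := Real.sq_sqrt (by positivity)
  have hr0 : r ≠ 0 := by positivity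
  have hr1 : (r : ℂ) ^ 2 ≠ 1 := by
    rw [← Complex.ofReal_pow, hr]
    exact_mod_cast (by omega : 4 * k + 3 ≠ 1)
  have hχ := Polynomial.eq_X_sq_sub_C_sq_pow_mul_X_sq_sub_one (Seidel A₁).charpoly_monic
    (by rw [charpoly_natDegree_eq_dim, Fintype.card_fin]; ring) (by exact_mod_cast hr0) hr1
    hm1 hm4 hm2 hm3
  have hann : (Seidel A₁ ^ 2 - ((r : ℂ) ^ 2) • 1) ^ (2 * k) * (Seidel A₁ ^ 2 - 1) = 0 := by
    have := (Seidel A₁).aeval_self_charpoly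
    rwa [hχ, map_mul, map_pow, map_sub, map_sub, map_pow, aeval_X, aeval_C,
      Algebra.algebraMap_eq_smul_one, map_one] at this
  have hS2 := (isHermitian_seidel A₁).sq_mulVec_eq_self_of_orthogonal_eigenvectors hr0 hann 1
    (fun _ hw => by
      rw [star_one, one_dotProduct]; exact sum_eq_zero_of_mainAngleSq_eq_zero hb1 hw)
    (fun _ hw => by
      rw [star_one, one_dotProduct]; exact sum_eq_zero_of_mainAngleSq_eq_zero hb4 hw)
  have hreal : ((A₁ - A₁ᵀ) * (A₁ - A₁ᵀ)) *ᵥ 1 = -1 := by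
    rw [seidel_sq, neg_mulVec, neg_eq_iff_eq_neg] at hS2
    ext i
    apply Complex.ofReal_injective
    simpa [mulVec, dotProduct] using congrFun hS2 i
  have := hA₁.card_filter_mulVec_one_eq_of_sub_transpose_sq (m := 2 * k + 1) (by ring) hreal
  push_cast at this
  rwa [add_sub_cancel_right] at this

theorem spectrum_implies_almost_regular {k : ℕ}
    (A₁ : Matrix (Fin (4 * k + 2)) (Fin (4 * k + 2)) ℝ)
    (hA₁ : IsTournament A₁)
    (hm1 : (Seidel A₁).charpoly.rootMultiplicity (Real.sqrt (4 * k + 3) : ℂ) = 2 * k)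
    (hm2 : (Seidel A₁).charpoly.rootMultiplicity 1 = 1)
    (hm3 : (Seidel A₁).charpoly.rootMultiplicity (-1) = 1)
    (hm4 : (Seidel A₁).charpoly.rootMultiplicity (-(Real.sqrt (4 * k + 3) : ℂ)) = 2 * k)
    (hb1 : mainAngleSq (Seidel A₁) (Real.sqrt (4 * k + 3) : ℂ) = 0)
    (hb2 : mainAngleSq (Seidel A₁) 1 = 1 / 2)
    (hb3 : mainAngleSq (Seidel A₁) (-1) = 1 / 2)
    (hb4 : mainAngleSq (Seidel A₁) (-(Real.sqrt (4 * k + 3) : ℂ)) = 0) :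
    (Finset.univ.filter fun i => A₁.mulVec (fun _ => 1) i = (2 * k + 1 : ℝ)).card = 2 * k + 1 ∧
    (Finset.univ.filter fun i => A₁.mulVec (fun _ => 1) i = (2 * k : ℝ)).card = 2 * k + 1 :=
  spectrum_implies_almost_regular_general A₁ hA₁ hm1 hm2 hm3 hm4 hb1 hb4
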